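/- There are only finitely many nonnegative n×n matrices all of whose entries are of the form Σ_α 1/d_α where the d_α are positive integers with Σ_α d_α ≤ d; consequently, there exists β with 0 < β ≤ 1 such that for every irreducible such matrix A with λ(A) ≥ 1, the (unique up to scale) positive eigenvector v of A for the eigenvalue λ(A), normalized so that max_i v_i = 1, satisfies min_i v_i ≥ β. -/

import Mathlib

/-- The spectral radius of a real square matrix: the supremum of `|μ|` over
complex eigenvalues `μ` of the matrix. -/
noncomputable def specRad {ι : Type*} [Fintype ι] [DecidableEq ι]
    (A : Matrix ι ι ℝ) : ℝ :=
  sSup {r : ℝ | ∃ μ ∈ spectrum ℂ (A.map (Complex.ofReal ·)), r = ‖μ‖}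

/-- A nonnegative matrix is irreducible if for every `i, j` some power has a
positive `(i,j)` entry. -/
def MatIrreducible {ι : Type*} [Fintype ι] [DecidableEq ι]
    (A : Matrix ι ι ℝ) : Prop :=
  ∀ i j : ι, ∃ q : ℕ, 0 < (A ^ q) i j

/-- `A` is a matrix each of whose entries is a sum `Σ_α 1/d_{i,j,α}` of reciprocals of
positive integers, with `Σ_{i,α} d_{i,j,α} ≤ d` for each column `j`. -/
def IsThurstonLinearMatrix (n d : ℕ) (A : Matrix (Fin n) (Fin n) ℝ) : Prop :=
  ∃ D : Fin n → Fin n → Multiset ℕ,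
    (∀ i j, ∀ a ∈ D i j, 0 < a) ∧
    (∀ j, (∑ i, (D i j).sum) ≤ d) ∧
    (∀ i j, A i j = ((D i j).map (fun a => (1 : ℝ) / a)).sum)


/-!
An entry `Σ 1/d_α` with `Σ d_α ≤ d` is read off a partition of some number `≤ d`, so there are
finitely many such matrices. A nonzero entry is at least `1/(d+1)` and every column sums to at
most `d`, so an eigenvalue `λ` with a positive eigenvector is at most `d`; hence along an edge
`A a b > 0` the eigenvector satisfies `v b / (d+1) ≤ A a b * v b ≤ λ * v a ≤ (d+1) * v a`.
Starting from an index where `v = 1`, irreducibility provides an edge into the set reached so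
far from outside it, so after `n - 1` steps every coordinate is at least `(d+1)^(-2(n-1))`.
-/

open Finset

theorem MatIrreducible.exists_pos_apply_of_notMem_of_mem {ι : Type*} [Fintype ι] [DecidableEq ι]
    {A : Matrix ι ι ℝ} (hirr : MatIrreducible A) (hA : ∀ i j, 0 ≤ A i j) {S : Set ι} {i j : ι}
    (hi : i ∉ S) (hj : j ∈ S) :
    ∃ a ∉ S, ∃ b ∈ S, 0 < A a b := by
  let := Matrix.toQuiver A
  obtain ⟨q, hq⟩ := hirr i j
  obtain ⟨⟨p, -⟩⟩ := (Matrix.pow_apply_pos_iff_nonempty_path hA q i j).1 hq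
  obtain ⟨a, ha, b, hb, e, -⟩ := p.exists_notMem_mem_hom_path_path_of_notMem_mem S hi hj
  exact ⟨a, ha, b, hb, e.down⟩

theorem pow_mul_le_of_exists_step {ι : Type*} [Fintype ι] [DecidableEq ι] {v : ι → ℝ} {c : ℝ}
    (hc₀ : 0 ≤ c) (hc₁ : c ≤ 1) {i₀ : ι} (hv₀ : 0 ≤ v i₀)
    (hstep : ∀ S : Finset ι, i₀ ∈ S → S ≠ univ → ∃ a ∉ S, ∃ b ∈ S, c * v b ≤ v a) (j : ι) :
    c ^ (Fintype.card ι - 1) * v i₀ ≤ v j := by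
  have key : ∀ k : ℕ, ∃ S : Finset ι, i₀ ∈ S ∧ min (k + 1) (Fintype.card ι) ≤ #S ∧
      ∀ j ∈ S, c ^ k * v i₀ ≤ v j := by
    intro k
    induction k with
    | zero => exact ⟨{i₀}, mem_singleton_self _, by simp, by simp⟩
    | succ k ih =>
      obtain ⟨S, hi₀, hcard, hS⟩ := ih
      have hmono : ∀ j ∈ S, c ^ (k + 1) * v i₀ ≤ v j := fun j hj =>
        (mul_le_mul_of_nonneg_right (pow_le_pow_of_le_one hc₀ hc₁ k.le_succ) hv₀).trans (hS j hj)
      by_cases huniv : S = univ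
      · exact ⟨S, hi₀, by simp [huniv], hmono⟩
      obtain ⟨a, ha, b, hb, hab⟩ := hstep S hi₀ huniv
      refine ⟨insert a S, mem_insert_of_mem hi₀, ?_, ?_⟩
      · rw [card_insert_of_notMem ha]
        have := card_lt_univ_of_notMem ha
        omega
      · rintro j hj
        rcases mem_insert.1 hj with rfl | hj
        · calc c ^ (k + 1) * v i₀ = c * (c ^ k * v i₀) := by ring
            _ ≤ c * v b := mul_le_mul_of_nonneg_left (hS b hb) hc₀
            _ ≤ v j := hab
        · exact hmono j hj
  obtain ⟨S, -, hcard, hS⟩ := key (Fintype.card ι - 1)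
  refine hS j ?_
  rw [eq_univ_of_card S (le_antisymm (card_le_univ S) (by omega))]
  exact mem_univ j

namespace Matrix

variable {ι : Type*} [Fintype ι] {A : Matrix ι ι ℝ} {v : ι → ℝ} {μ : ℝ}

theorem le_of_mulVec_eq_smul_of_sum_apply_le [Nonempty ι] {s : ℝ} (hcol : ∀ j, ∑ i, A i j ≤ s)
    (hv : ∀ i, 0 < v i) (hAv : A *ᵥ v = μ • v) : μ ≤ s := by
  refine le_of_mul_le_mul_right ?_ (sum_pos (fun i _ => hv i) univ_nonempty)
  calc μ * ∑ i, v i = ∑ i, (A *ᵥ v) i := by simp [hAv, mul_sum]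
    _ = ∑ j, (∑ i, A i j) * v j := by simp only [mulVec, dotProduct, sum_mul]; exact sum_comm
    _ ≤ ∑ j, s * v j := sum_le_sum fun j _ => mul_le_mul_of_nonneg_right (hcol j) (hv j).le
    _ = s * ∑ i, v i := (mul_sum ..).symm

theorem apply_mul_le_of_mulVec_eq_smul (hA : ∀ i j, 0 ≤ A i j) (hv : ∀ i, 0 ≤ v i)
    (hAv : A *ᵥ v = μ • v) (a b : ι) : A a b * v b ≤ μ * v a := by
  calc A a b * v b ≤ ∑ j, A a j * v j :=
        single_le_sum (f := fun j => A a j * v j) (fun j _ => mul_nonneg (hA a j) (hv j))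
          (mem_univ b)
    _ = μ * v a := by simpa [mulVec, dotProduct] using congrFun hAv a

variable [DecidableEq ι]

theorem pow_mul_le_of_mulVec_eq_smul (hA : ∀ i j, 0 ≤ A i j) (hirr : MatIrreducible A)
    {δ Λ : ℝ} (hδ : 0 < δ) (hδΛ : δ ≤ Λ) (hpos : ∀ a b, 0 < A a b → δ ≤ A a b) (hμ : μ ≤ Λ)
    (hv : ∀ i, 0 < v i) (hAv : A *ᵥ v = μ • v) (i₀ j : ι) :
    (δ / Λ) ^ (Fintype.card ι - 1) * v i₀ ≤ v j := by
  have hΛ : 0 < Λ := hδ.trans_le hδΛ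
  refine pow_mul_le_of_exists_step (div_nonneg hδ.le hΛ.le) ((div_le_one hΛ).2 hδΛ)
    (hv i₀).le (fun S hi₀ hS => ?_) j
  obtain ⟨i, hi⟩ : ∃ i, i ∉ S := by simpa [eq_univ_iff_forall] using hS
  obtain ⟨a, ha, b, hb, hab⟩ :=
    hirr.exists_pos_apply_of_notMem_of_mem (S := (S : Set ι)) hA hi hi₀
  refine ⟨a, ha, b, hb, ?_⟩
  rw [div_mul_eq_mul_div, div_le_iff₀ hΛ]
  calc δ * v b ≤ A a b * v b := mul_le_mul_of_nonneg_right (hpos a b hab) (hv b).le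
    _ ≤ μ * v a := apply_mul_le_of_mulVec_eq_smul hA (fun i => (hv i).le) hAv a b
    _ ≤ v a * Λ := by rw [mul_comm]; exact mul_le_mul_of_nonneg_left hμ (hv a).le

end Matrix

theorem Multiset.finite_setOf_forall_pos_sum_le (d : ℕ) :
    {s : Multiset ℕ | (∀ a ∈ s, 0 < a) ∧ s.sum ≤ d}.Finite := by
  refine ((range (d + 1)).finite_toSet.biUnion fun m _ =>
    Set.finite_range (Nat.Partition.parts (n := m))).subset ?_
  rintro s ⟨hpos, hsum⟩
  simp only [Set.mem_iUnion, Set.mem_range]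
  exact ⟨s.sum, mem_range.2 (Nat.lt_succ_of_le hsum), ⟨s, hpos _, rfl⟩, rfl⟩

theorem Multiset.sum_map_inv_le_sum {s : Multiset ℕ} (hs : ∀ a ∈ s, 0 < a) :
    (s.map fun a : ℕ => (a : ℝ)⁻¹).sum ≤ s.sum := by
  rw [Nat.cast_multiset_sum]
  refine Multiset.sum_map_le_sum_map _ _ fun a ha => ?_
  have : (1 : ℝ) ≤ a := by exact_mod_cast hs a ha
  exact (inv_le_one_of_one_le₀ this).trans this

/-- In `IsThurstonLinearMatrix` the cast `ℕ → ℝ` is elaborated through the multiset monad;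
this is the definition with a plain `Multiset.map`. -/
theorem isThurstonLinearMatrix_iff {n d : ℕ} {A : Matrix (Fin n) (Fin n) ℝ} :
    IsThurstonLinearMatrix n d A ↔ ∃ D : Fin n → Fin n → Multiset ℕ,
      (∀ i j, ∀ a ∈ D i j, 0 < a) ∧ (∀ j, ∑ i, (D i j).sum ≤ d) ∧
      ∀ i j, A i j = ((D i j).map fun a : ℕ => (a : ℝ)⁻¹).sum := by
  simp [IsThurstonLinearMatrix, Multiset.bind_singleton, Multiset.map_map]

namespace IsThurstonLinearMatrix

variable {n d : ℕ} {A : Matrix (Fin n) (Fin n) ℝ}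

theorem nonneg (hA : IsThurstonLinearMatrix n d A) (i j : Fin n) : 0 ≤ A i j := by
  obtain ⟨D, -, -, hAD⟩ := isThurstonLinearMatrix_iff.1 hA
  rw [hAD]
  exact Multiset.sum_nonneg fun x hx => by
    obtain ⟨a, -, rfl⟩ := Multiset.mem_map.1 hx
    positivity

theorem sum_apply_le (hA : IsThurstonLinearMatrix n d A) (j : Fin n) : ∑ i, A i j ≤ d := by
  obtain ⟨D, hpos, hsum, hAD⟩ := isThurstonLinearMatrix_iff.1 hA
  calc ∑ i, A i j ≤ ∑ i, ((D i j).sum : ℝ) := by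
        simp_rw [hAD]
        exact sum_le_sum fun i _ => Multiset.sum_map_inv_le_sum (hpos i j)
    _ ≤ d := by exact_mod_cast hsum j

theorem inv_le_of_pos (hA : IsThurstonLinearMatrix n d A) {i j : Fin n} (hij : 0 < A i j) :
    ((d : ℝ) + 1)⁻¹ ≤ A i j := by
  obtain ⟨D, hpos, hsum, hAD⟩ := isThurstonLinearMatrix_iff.1 hA
  rw [hAD] at hij ⊢
  obtain ⟨a, ha⟩ := Multiset.exists_mem_of_ne_zero (s := D i j) (by rintro h; simp [h] at hij)
  have had : a ≤ d :=
    (Multiset.le_sum_of_mem ha).trans ((single_le_sum (fun _ _ => Nat.zero_le _)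
      (mem_univ i)).trans (hsum j))
  calc ((d : ℝ) + 1)⁻¹ ≤ (a : ℝ)⁻¹ := by
        gcongr
        · exact_mod_cast hpos i j a ha
        · exact_mod_cast had.trans d.le_succ
    _ ≤ _ := Multiset.single_le_sum (fun x hx => by
          obtain ⟨b, -, rfl⟩ := Multiset.mem_map.1 hx
          positivity) _ (Multiset.mem_map_of_mem (fun a : ℕ => (a : ℝ)⁻¹) ha)

end IsThurstonLinearMatrix

theorem finite_setOf_isThurstonLinearMatrix (n d : ℕ) :
    {A | IsThurstonLinearMatrix n d A}.Finite := by
  have hF := (Multiset.finite_setOf_forall_pos_sum_le d).image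
    fun s => (s.map fun a : ℕ => (a : ℝ)⁻¹).sum
  refine (Set.Finite.pi (t := fun _ : Fin n => Set.univ.pi fun _ : Fin n => _)
    fun _ => Set.Finite.pi fun _ => hF).subset ?_
  intro A hA
  obtain ⟨D, hpos, hsum, hAD⟩ := isThurstonLinearMatrix_iff.1 hA
  rintro i - j -
  exact ⟨D i j, ⟨hpos i j, (single_le_sum (fun _ _ => Nat.zero_le _) (mem_univ i)).trans
    (hsum j)⟩, (hAD i j).symm⟩

theorem finitely_many_thurston_matrices_and_eigenvector_bound (n d : ℕ) (hn : 0 < n) :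
    {A : Matrix (Fin n) (Fin n) ℝ | IsThurstonLinearMatrix n d A}.Finite ∧
    ∃ β : ℝ, 0 < β ∧ β ≤ 1 ∧
      ∀ A : Matrix (Fin n) (Fin n) ℝ, IsThurstonLinearMatrix n d A →
        MatIrreducible A → 1 ≤ specRad A →
        ∀ v : Fin n → ℝ, (∀ i, 0 < v i) →
          A.mulVec v = specRad A • v →
          Finset.univ.sup' (Finset.univ_nonempty_iff.mpr (Fin.pos_iff_nonempty.mp hn)) v = 1 →
          ∀ i, β ≤ v i := by
  have : Nonempty (Fin n) := Fin.pos_iff_nonempty.mp hn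
  have hδ : (0 : ℝ) < ((d : ℝ) + 1)⁻¹ := by positivity
  have hd : (1 : ℝ) ≤ d + 1 := by linarith [(d.cast_nonneg : (0 : ℝ) ≤ d)]
  have hδΛ : ((d : ℝ) + 1)⁻¹ ≤ d + 1 := (inv_le_one_of_one_le₀ hd).trans hd
  refine ⟨finite_setOf_isThurstonLinearMatrix n d, (((d : ℝ) + 1)⁻¹ / (d + 1)) ^ (n - 1),
    by positivity, pow_le_one₀ (by positivity) ((div_le_one (by positivity)).2 hδΛ), ?_⟩
  intro A hA hirr _ v hv hAv hmax i
  obtain ⟨i₀, -, hi₀⟩ := exists_mem_eq_sup' univ_nonempty v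
  have hμ : specRad A ≤ (d : ℝ) + 1 :=
    (Matrix.le_of_mulVec_eq_smul_of_sum_apply_le hA.sum_apply_le hv hAv).trans (by linarith)
  simpa [← hi₀, hmax] using
    Matrix.pow_mul_le_of_mulVec_eq_smul hA.nonneg hirr hδ hδΛ (fun a b => hA.inv_le_of_pos) hμ
      hv hAv i₀ i
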